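/- Let R be a commutative ring and A a Hopf algebra over R whose antipode S : A → A is bijective. Let T ∈ Mₙ(A) be a corepresentation matrix, i.e. Δ(T k l) = ∑_p (T k p) ⊗ (T p l) for all k, l, and suppose ε(T k l) = 1 if k = l and 0 otherwise. Then the transpose Tᵀ is a unit of the matrix ring Mₙ(A); explicitly, the matrix (T.map S⁻¹)ᵀ, obtained by applying the inverse of the antipode entrywise and transposing, is a two-sided inverse of Tᵀ. -/

import Mathlib

/-!
The antipode axioms, evaluated on the entries of `T` and combined with `ε(T) = 1`, say
`S(T) * T = 1 = T * S(T)` for `S(T) := T.map S`. Since `S` is an anti-homomorphism,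
applying it entrywise to `Mᵀ * Nᵀ` gives `(S(N) * S(M))ᵀ`. For `U := T.map S⁻¹` we have
`S(U) = T`, so `S(Uᵀ * Tᵀ) = (S(T) * T)ᵀ = 1` and `S(Tᵀ * Uᵀ) = (T * S(T))ᵀ = 1`;
injectivity of `S` turns these into `Uᵀ * Tᵀ = 1 = Tᵀ * Uᵀ`.
-/

open TensorProduct Matrix

namespace HopfAlgebra

variable {R A : Type*} [CommSemiring R] [Semiring A] [HopfAlgebra R A]

section Corepresentation

variable {ι : Type*} [Fintype ι] [DecidableEq ι] {T : Matrix ι ι A}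

theorem map_antipode_mul_self_eq_one
    (hT : ∀ k l, Coalgebra.comul (R := R) (T k l) = ∑ p, T k p ⊗ₜ[R] T p l)
    (hε : ∀ k l, Coalgebra.counit (R := R) (T k l) = if k = l then 1 else 0) :
    T.map (antipode R) * T = 1 := by
  ext k l
  have h := mul_antipode_rTensor_comul_apply (R := R) (T k l)
  simp only [hT, hε, map_sum, LinearMap.rTensor_tmul, LinearMap.mul'_apply] at h
  simpa [mul_apply, one_apply, apply_ite (algebraMap R A)] using h

theorem mul_map_antipode_self_eq_one
    (hT : ∀ k l, Coalgebra.comul (R := R) (T k l) = ∑ p, T k p ⊗ₜ[R] T p l)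
    (hε : ∀ k l, Coalgebra.counit (R := R) (T k l) = if k = l then 1 else 0) :
    T * T.map (antipode R) = 1 := by
  ext k l
  have h := mul_antipode_lTensor_comul_apply (R := R) (T k l)
  simp only [hT, hε, map_sum, LinearMap.lTensor_tmul, LinearMap.mul'_apply] at h
  simpa [mul_apply, one_apply, apply_ite (algebraMap R A)] using h

end Corepresentation

theorem map_antipode_transpose_mul_transpose {l m n : Type*} [Fintype m]
    (M : Matrix m l A) (N : Matrix n m A) :
    (Mᵀ * Nᵀ).map (antipode R) = (N.map (antipode R) * M.map (antipode R))ᵀ := by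
  ext i j
  simp [mul_apply, antipode_mul_antidistrib]

end HopfAlgebra

open HopfAlgebra in
/-- If `T` is a corepresentation matrix over a Hopf algebra with bijective antipode, whose
entrywise counit is the identity matrix, then the transpose `Tᵀ` is invertible: applying
the inverse of the antipode entrywise and transposing yields a two-sided inverse of `Tᵀ`. -/
theorem transpose_isUnit_of_bijective_antipode (R A : Type*) [CommRing R] [Ring A]
    [HopfAlgebra R A] (hbij : Function.Bijective (HopfAlgebra.antipode (R := R) (A := A)))
    (n : ℕ) (T : Matrix (Fin n) (Fin n) A)
    (hT : ∀ k l, Coalgebra.comul (R := R) (T k l) = ∑ p : Fin n, T k p ⊗ₜ[R] T p l)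
    (hε : ∀ k l, Coalgebra.counit (R := R) (T k l) = if k = l then 1 else 0) :
    IsUnit Tᵀ ∧
      (T.map (Function.invFun (HopfAlgebra.antipode (R := R) (A := A))))ᵀ * Tᵀ = 1 ∧
      Tᵀ * (T.map (Function.invFun (HopfAlgebra.antipode (R := R) (A := A))))ᵀ = 1 := by
  set U := T.map (Function.invFun (antipode R (A := A)))
  have hU : U.map (antipode R) = T := by
    ext k l
    exact Function.rightInverse_invFun hbij.2 (T k l)
  have map_antipode_one : (1 : Matrix (Fin n) (Fin n) A).map (antipode R) = 1 :=
    Matrix.map_one _ (map_zero _) antipode_one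
  have hleft : Uᵀ * Tᵀ = 1 := by
    refine map_injective hbij.1 ?_
    beta_reduce
    rw [map_antipode_transpose_mul_transpose, hU, map_antipode_mul_self_eq_one hT hε,
      transpose_one, map_antipode_one]
  have hright : Tᵀ * Uᵀ = 1 := by
    refine map_injective hbij.1 ?_
    beta_reduce
    rw [map_antipode_transpose_mul_transpose, hU, mul_map_antipode_self_eq_one hT hε,
      transpose_one, map_antipode_one]
  exact ⟨⟨⟨Tᵀ, Uᵀ, hright, hleft⟩, rfl⟩, hleft, hright⟩
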